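/- arXiv:1508.06763 — 4 statements merged into one kernel-verified Lean document; each statement's English description precedes it below -/
import Mathlib

section
/- The function g : ℝ → ℝ defined by g(t) = log(sinh t / t) for t ≠ 0 and g(0) = 0 is convex on all of ℝ. -/
/-!
`g` is even, so it suffices that `g` is convex and nondecreasing on `[0, ∞)`: then `g = g ∘ |·|`
is a nondecreasing convex function of a convex function. On `(0, ∞)` we have
`g'' t = 1 / t² - 1 / sinh² t ≥ 0` because `t ≤ sinh t`, and `g` is continuous at `0` because
`sinh t / t` is the difference quotient of `sinh` at `0`. The same inequality `t ≤ sinh t` gives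
`g ≥ 0 = g 0`, and a convex function on `[0, ∞)` minimal at `0` is nondecreasing.
-/

open Real Set

section Convexity

variable {𝕜 β : Type*} [Field 𝕜] [LinearOrder 𝕜] [IsStrictOrderedRing 𝕜]
  [AddCommGroup β] [LinearOrder β] [IsOrderedAddMonoid β] [Module 𝕜 β] [PosSMulStrictMono 𝕜 β]

theorem ConvexOn.monotoneOn_Ici_of_isMinOn {f : 𝕜 → β} {a : 𝕜} (hf : ConvexOn 𝕜 (Ici a) f)
    (hmin : IsMinOn f (Ici a) a) : MonotoneOn f (Ici a) := by
  intro x hx y hy hxy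
  rcases hxy.eq_or_lt with rfl | hxy
  · rfl
  rcases (mem_Ici.1 hx).eq_or_lt with rfl | hax
  · exact hmin hy
  exact hf.le_right_of_left_le self_mem_Ici hy
    (by rw [openSegment_eq_Ioo (hax.trans hxy)]; exact ⟨hax, hxy⟩) (hmin hx)

end Convexity

theorem ConvexOn.convexOn_univ_of_even {β : Type*} [AddCommGroup β] [PartialOrder β]
    [IsOrderedAddMonoid β] [Module ℝ β] {f : ℝ → β} (hf : ConvexOn ℝ (Ici 0) f)
    (hmono : MonotoneOn f (Ici 0)) (heven : ∀ x, f (-x) = f x) : ConvexOn ℝ univ f := by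
  have himage : (fun x : ℝ => |x|) '' univ = Ici 0 := by
    ext y
    exact ⟨fun ⟨x, _, hx⟩ => hx ▸ abs_nonneg x, fun hy => ⟨y, trivial, abs_of_nonneg hy⟩⟩
  have hcomp : ConvexOn ℝ univ (f ∘ fun x => |x|) := by
    rw [← himage] at hf hmono
    simpa only [Real.norm_eq_abs] using hf.comp convexOn_univ_norm hmono
  refine hcomp.congr fun x _ => ?_
  rcases le_total 0 x with hx | hx
  · simp [abs_of_nonneg hx]
  · simp [abs_of_nonpos hx, heven]

theorem one_le_sinh_div_self {t : ℝ} (ht : t ≠ 0) : 1 ≤ sinh t / t := by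
  rcases ht.lt_or_gt with ht | ht
  · rw [le_div_iff_of_neg ht, one_mul]
    exact sinh_le_self_iff.2 ht.le
  · rw [one_le_div ht]
    exact self_le_sinh_iff.2 ht.le

theorem dslope_sinh_zero_of_ne {t : ℝ} (ht : t ≠ 0) : dslope sinh 0 t = sinh t / t := by
  simp [dslope_of_ne _ ht, slope_def_field]

theorem dslope_sinh_zero_pos (t : ℝ) : 0 < dslope sinh 0 t := by
  rcases eq_or_ne t 0 with rfl | ht
  · simp [dslope_same]
  · rw [dslope_sinh_zero_of_ne ht]
    exact one_pos.trans_le (one_le_sinh_div_self ht)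

-- At `t = 0` both sides vanish: `sinh 0 / 0 = 0` and `dslope sinh 0 0 = cosh 0 = 1`.
theorem log_sinh_div_self_eq_log_dslope (t : ℝ) : log (sinh t / t) = log (dslope sinh 0 t) := by
  rcases eq_or_ne t 0 with rfl | ht
  · simp [dslope_same]
  · rw [dslope_sinh_zero_of_ne ht]

theorem continuous_log_sinh_div_self : Continuous fun t : ℝ => log (sinh t / t) := by
  have hdslope : Continuous (dslope sinh 0) := continuousOn_univ.1 <|
    (continuousOn_dslope Filter.univ_mem).2 ⟨continuous_sinh.continuousOn, differentiable_sinh 0⟩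
  simpa only [log_sinh_div_self_eq_log_dslope] using
    hdslope.log fun t => (dslope_sinh_zero_pos t).ne'

theorem log_sinh_div_self_nonneg (t : ℝ) : 0 ≤ log (sinh t / t) := by
  rcases eq_or_ne t 0 with rfl | ht
  · simp
  · exact log_nonneg (one_le_sinh_div_self ht)

theorem hasDerivAt_log_sinh_div_self {t : ℝ} (ht : t ≠ 0) :
    HasDerivAt (fun t => log (sinh t / t)) (cosh t / sinh t - t⁻¹) t := by
  have hs := sinh_ne_zero.2 ht
  refine (((hasDerivAt_sinh t).div (hasDerivAt_id t) ht).log (div_ne_zero hs ht)).congr_deriv ?_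
  simp only [id, mul_one, Pi.div_apply]
  field_simp

theorem hasDerivAt_coth_sub_inv {t : ℝ} (ht : t ≠ 0) :
    HasDerivAt (fun t => cosh t / sinh t - t⁻¹) ((t ^ 2)⁻¹ - (sinh t ^ 2)⁻¹) t := by
  have hs := sinh_ne_zero.2 ht
  refine (((hasDerivAt_cosh t).div (hasDerivAt_sinh t) hs).sub (hasDerivAt_inv ht)).congr_deriv ?_
  field_simp
  linear_combination (-t ^ 2) * cosh_sq t

theorem convexOn_Ici_log_sinh_div_self : ConvexOn ℝ (Ici 0) fun t => log (sinh t / t) := by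
  refine convexOn_of_hasDerivWithinAt2_nonneg (convex_Ici 0)
    continuous_log_sinh_div_self.continuousOn
    (fun t ht => (hasDerivAt_log_sinh_div_self (interior_Ici.subset ht).ne').hasDerivWithinAt)
    (fun t ht => (hasDerivAt_coth_sub_inv (interior_Ici.subset ht).ne').hasDerivWithinAt)
    fun t ht => ?_
  have ht : 0 < t := interior_Ici.subset ht
  exact sub_nonneg.2 <| inv_anti₀ (by positivity) <|
    pow_le_pow_left₀ ht.le (self_le_sinh_iff.2 ht.le) 2

/-- The function `t ↦ log (sinh t / t)` (with value `0` at `t = 0` by Lean's conventions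
`0/0 = 0` and `log 0 = 0`) is convex on all of `ℝ`. -/
theorem log_sinh_div_self_convexOn :
    ConvexOn ℝ Set.univ (fun t : ℝ => Real.log (Real.sinh t / t)) :=
  convexOn_Ici_log_sinh_div_self.convexOn_univ_of_even
    (convexOn_Ici_log_sinh_div_self.monotoneOn_Ici_of_isMinOn fun t _ => by
      simpa using log_sinh_div_self_nonneg t)
    fun t => by rw [sinh_neg, neg_div_neg_eq]
end

section
/- Let η̃ : ℝ → ℝ be defined by η̃(t) = sinh t / t. Then for every t ≠ 0 one has sinh(t)² > t², and the log-convexity discriminant satisfies η̃(t) · η̃''(t) − (η̃'(t))² = (sinh(t)² − t²)/t⁴ > 0, where η̃' = deriv η̃ and η̃'' is the second derivative of η̃. -/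
/-!
Differentiating `sinh t / t` twice, the identity `cosh² - sinh² = 1` collapses the
log-convexity discriminant to `(sinh² t - t²) / t⁴`, which is positive because
`|t| < sinh |t| = |sinh t|` for `t ≠ 0`.
-/

open Real Topology

namespace Real

theorem sq_lt_sinh_sq {t : ℝ} (ht : t ≠ 0) : t ^ 2 < sinh t ^ 2 := by
  rw [sq_lt_sq, abs_sinh]
  exact self_lt_sinh_iff.mpr (abs_pos.mpr ht)

theorem hasDerivAt_sinh_div_self {t : ℝ} (ht : t ≠ 0) :
    HasDerivAt (fun s => sinh s / s) ((cosh t * t - sinh t) / t ^ 2) t := by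
  simpa using (hasDerivAt_sinh t).fun_div (hasDerivAt_id' t) ht

theorem deriv_sinh_div_self_eventuallyEq {t : ℝ} (ht : t ≠ 0) :
    deriv (fun s => sinh s / s) =ᶠ[𝓝 t] fun s => (cosh s * s - sinh s) / s ^ 2 := by
  filter_upwards [isOpen_ne.mem_nhds ht] with s hs
  exact (hasDerivAt_sinh_div_self hs).deriv

theorem deriv_deriv_sinh_div_self {t : ℝ} (ht : t ≠ 0) :
    deriv (deriv fun s => sinh s / s) t
      = (sinh t * t ^ 2 - 2 * (cosh t * t - sinh t)) / t ^ 3 := by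
  rw [(deriv_sinh_div_self_eventuallyEq ht).deriv_eq]
  have hnum : HasDerivAt (fun s => cosh s * s - sinh s) (sinh t * t) t := by
    simpa using ((hasDerivAt_cosh t).fun_mul (hasDerivAt_id' t)).fun_sub (hasDerivAt_sinh t)
  rw [(hnum.fun_div (hasDerivAt_pow 2 t) (pow_ne_zero 2 ht)).deriv]
  field_simp
  ring

end Real

/-- For `η̃ t = sinh t / t` and every `t ≠ 0`, one has `sinh t ^ 2 > t ^ 2`, and the
log-convexity discriminant satisfies
`η̃ t * η̃'' t - (η̃' t) ^ 2 = (sinh t ^ 2 - t ^ 2) / t ^ 4 > 0`. -/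
theorem sinh_div_self_log_convexity_discriminant (t : ℝ) (ht : t ≠ 0) :
    Real.sinh t ^ 2 > t ^ 2 ∧
    (fun s : ℝ => Real.sinh s / s) t *
        deriv (deriv (fun s : ℝ => Real.sinh s / s)) t -
      (deriv (fun s : ℝ => Real.sinh s / s) t) ^ 2 =
        (Real.sinh t ^ 2 - t ^ 2) / t ^ 4 ∧
    0 < (Real.sinh t ^ 2 - t ^ 2) / t ^ 4 := by
  have hlt := Real.sq_lt_sinh_sq ht
  refine ⟨hlt, ?_, div_pos (sub_pos.mpr hlt) (by positivity)⟩
  rw [Real.deriv_deriv_sinh_div_self ht, (Real.hasDerivAt_sinh_div_self ht).deriv]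
  field_simp
  linear_combination (-t ^ 2) * Real.cosh_sq_sub_sinh_sq t
end

section
/- Let S and T be unbounded operators on a complex Hilbert space E defined on a common dense domain D (i.e. S.domain = T.domain = D with D dense in E), each symmetric and positive on D, and each essentially self-adjoint (closable with self-adjoint closure). Then the sum S + T with domain D is closable, and its closure C = (S+T)‾ satisfies ker C ⊆ ker S̄ ∩ ker T̄; explicitly, if x lies in the domain of C and C x = 0, then x lies in the domains of the closures S̄ and T̄ and S̄ x = 0 and T̄ x = 0. -/
open scoped ComplexInnerProductSpace
open LinearPMap Filter Topology RCLike

/-!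
Take `aₙ ∈ D` with `aₙ → x` and `(S + T) aₙ → 0`. Then `⟪aₙ, S aₙ⟫ + ⟪aₙ, T aₙ⟫ → 0`, so by
positivity both quadratic forms tend to `0`. Cauchy–Schwarz for the positive form `⟪·, S ·⟫`
gives `‖⟪S y, aₙ⟫‖² ≤ ⟪y, S y⟫ ⟪aₙ, S aₙ⟫ → 0`, so `x ⊥ S D`; by continuity `x ⊥ ran S̄`, i.e.
`x ∈ ker S̄* = ker S̄`. The same argument applies to `T`.
-/

namespace LinearPMap

variable {𝕜 E F : Type*} [RCLike 𝕜] [NormedAddCommGroup E] [InnerProductSpace 𝕜 E]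
  [NormedAddCommGroup F] [InnerProductSpace 𝕜 F]

theorem IsFormalAdjoint.add {T T' : E →ₗ.[𝕜] F} {S S' : F →ₗ.[𝕜] E}
    (h : T.IsFormalAdjoint S) (h' : T'.IsFormalAdjoint S') :
    (T + T').IsFormalAdjoint (S + S') := fun x y => by
  simp only [add_apply, inner_add_left, inner_add_right, h ⟨x, x.2.1⟩ ⟨y, y.2.1⟩,
    h' ⟨x, x.2.2⟩ ⟨y, y.2.2⟩]

theorem IsFormalAdjoint.isClosable [CompleteSpace E] {T : E →ₗ.[𝕜] F} {S : F →ₗ.[𝕜] E}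
    (h : T.IsFormalAdjoint S) (hT : Dense (T.domain : Set E)) : S.IsClosable :=
  (adjoint_isClosed hT).isClosable.leIsClosable (h.le_adjoint hT)

theorem IsClosable.exists_seq_tendsto {T : E →ₗ.[𝕜] F} (hT : T.IsClosable)
    (x : T.closure.domain) : ∃ a : ℕ → T.domain,
      Tendsto (fun n => (a n : E)) atTop (𝓝 x) ∧
        Tendsto (fun n => T (a n)) atTop (𝓝 (T.closure x)) := by
  have hx : ((x : E), T.closure x) ∈ _root_.closure (T.graph : Set (E × F)) := by
    rw [← Submodule.topologicalClosure_coe, hT.graph_closure_eq_closure_graph]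
    exact T.closure.mem_graph x
  obtain ⟨b, hb, hbx⟩ := mem_closure_iff_seq_limit.mp hx
  choose a ha using fun n => T.mem_graph_iff.mp (hb n)
  refine ⟨a, ?_, ?_⟩
  · simpa only [(ha _).1] using hbx.fst_nhds
  · simpa only [(ha _).2] using hbx.snd_nhds

theorem IsClosable.inner_closure_apply_eq_zero {T : E →ₗ.[𝕜] F} (hT : T.IsClosable) {x : F}
    (h : ∀ y : T.domain, inner 𝕜 (T y) x = 0) (y : T.closure.domain) :
    inner 𝕜 (T.closure y) x = 0 := by
  have hgraph : (T.closure.graph : Set (E × F)) ⊆ {p | inner 𝕜 p.2 x = 0} := by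
    rw [← hT.graph_closure_eq_closure_graph, Submodule.topologicalClosure_coe]
    refine closure_minimal ?_ (isClosed_eq (continuous_snd.inner continuous_const) continuous_const)
    intro p hp
    obtain ⟨y, rfl⟩ := T.mem_graph_iff'.mp hp
    exact h y
  exact hgraph (T.closure.mem_graph y)

theorem _root_.IsSelfAdjoint.exists_apply_eq_zero_of_inner_apply_eq_zero [CompleteSpace E]
    {A : E →ₗ.[𝕜] E} (hA : IsSelfAdjoint A) {x : E} (h : ∀ y : A.domain, inner 𝕜 (A y) x = 0) :
    ∃ hx : x ∈ A.domain, A ⟨x, hx⟩ = 0 := by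
  have hx : ∀ y : A.domain, inner 𝕜 (0 : E) y = inner 𝕜 x (A y) := fun y => by
    rw [inner_zero_left, ← inner_conj_symm, h y]
    simp
  have hxA : x ∈ A†.domain := mem_adjoint_domain_of_exists x ⟨0, hx⟩
  have hker : ∃ hx : x ∈ A†.domain, A† ⟨x, hx⟩ = 0 :=
    ⟨hxA, adjoint_apply_eq hA.dense_domain ⟨x, hxA⟩ hx⟩
  rwa [isSelfAdjoint_def.mp hA] at hker

abbrev innerApplyCore (T : E →ₗ.[𝕜] E) (hT : T.IsFormalAdjoint T)
    (hpos : ∀ x : T.domain, 0 ≤ re (inner 𝕜 (x : E) (T x))) :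
    PreInnerProductSpace.Core 𝕜 T.domain where
  inner x y := inner 𝕜 (x : E) (T y)
  conj_inner_symm x y := by rw [inner_conj_symm, hT]
  re_inner_nonneg := hpos
  add_left x y z := inner_add_left _ _ _
  smul_left x y r := inner_smul_left _ _ _

theorem norm_inner_apply_sq_le {T : E →ₗ.[𝕜] E} (hT : T.IsFormalAdjoint T)
    (hpos : ∀ x : T.domain, 0 ≤ re (inner 𝕜 (x : E) (T x))) (x y : T.domain) :
    ‖inner 𝕜 (x : E) (T y)‖ ^ 2 ≤ re (inner 𝕜 (x : E) (T x)) * re (inner 𝕜 (y : E) (T y)) := by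
  have h := InnerProductSpace.Core.inner_mul_inner_self_le (c := innerApplyCore T hT hpos) x y
  rwa [← InnerProductSpace.Core.norm_inner_symm (c := innerApplyCore T hT hpos) x y, ← sq] at h

theorem inner_apply_eq_zero_of_tendsto {T : E →ₗ.[𝕜] E} (hT : T.IsFormalAdjoint T)
    (hpos : ∀ x : T.domain, 0 ≤ re (inner 𝕜 (x : E) (T x))) {x : E} {a : ℕ → T.domain}
    (ha : Tendsto (fun n => (a n : E)) atTop (𝓝 x))
    (hq : Tendsto (fun n => re (inner 𝕜 (a n : E) (T (a n)))) atTop (𝓝 0)) (y : T.domain) :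
    inner 𝕜 (T y) x = 0 := by
  have hbound : Tendsto (fun n => √(re (inner 𝕜 (y : E) (T y)) * re (inner 𝕜 (a n : E) (T (a n)))))
      atTop (𝓝 0) := by
    simpa using (hq.const_mul _).sqrt
  have hnorm : Tendsto (fun n => ‖inner 𝕜 (T y) (a n : E)‖) atTop (𝓝 0) := by
    refine squeeze_zero (fun _ => norm_nonneg _) (fun n => ?_) hbound
    rw [hT y (a n)]
    exact Real.le_sqrt_of_sq_le (norm_inner_apply_sq_le hT hpos y (a n))
  exact tendsto_nhds_unique (tendsto_const_nhds.inner ha)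
    (tendsto_zero_iff_norm_tendsto_zero.2 hnorm)

theorem exists_closure_apply_eq_zero_of_tendsto [CompleteSpace E] {T : E →ₗ.[𝕜] E}
    (hT : T.IsFormalAdjoint T) (hpos : ∀ x : T.domain, 0 ≤ re (inner 𝕜 (x : E) (T x)))
    (hc : T.IsClosable) (hsa : IsSelfAdjoint T.closure) {x : E} {a : ℕ → T.domain}
    (ha : Tendsto (fun n => (a n : E)) atTop (𝓝 x))
    (hq : Tendsto (fun n => re (inner 𝕜 (a n : E) (T (a n)))) atTop (𝓝 0)) :
    ∃ hx : x ∈ T.closure.domain, T.closure ⟨x, hx⟩ = 0 :=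
  hsa.exists_apply_eq_zero_of_inner_apply_eq_zero
    (hc.inner_closure_apply_eq_zero (inner_apply_eq_zero_of_tendsto hT hpos ha hq))

end LinearPMap

/-- If `S` and `T` are unbounded operators on a complex Hilbert space, defined on a common
dense domain `D`, each symmetric, positive and essentially self-adjoint, then the sum
`S + T` (with domain `D`) is closable and the kernel of its closure `C` is contained in
`ker S̄ ∩ ker T̄`. -/
theorem kernel_closure_sum_subset_inter_kernels
    (E : Type*) [NormedAddCommGroup E] [InnerProductSpace ℂ E] [CompleteSpace E]
    (S T : E →ₗ.[ℂ] E) (D : Submodule ℂ E)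
    (hSD : S.domain = D) (hTD : T.domain = D) (hdense : Dense (D : Set E))
    (hSsymm : ∀ x y : S.domain, ⟪S x, (y : E)⟫ = ⟪(x : E), S y⟫)
    (hTsymm : ∀ x y : T.domain, ⟪T x, (y : E)⟫ = ⟪(x : E), T y⟫)
    (hSpos : ∀ x : S.domain, 0 ≤ (⟪(x : E), S x⟫).re)
    (hTpos : ∀ x : T.domain, 0 ≤ (⟪(x : E), T x⟫).re)
    (hSesa : S.IsClosable ∧ IsSelfAdjoint S.closure)
    (hTesa : T.IsClosable ∧ IsSelfAdjoint T.closure) :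
    (S + T).IsClosable ∧
      ∀ x : (S + T).closure.domain, (S + T).closure x = 0 →
        ∃ (hxS : (x : E) ∈ S.closure.domain) (hxT : (x : E) ∈ T.closure.domain),
          S.closure ⟨x, hxS⟩ = 0 ∧ T.closure ⟨x, hxT⟩ = 0 := by
  have hdom : Dense ((S + T).domain : Set E) := by rwa [add_domain, hSD, hTD, inf_idem]
  have hclos : (S + T).IsClosable := (IsFormalAdjoint.add hSsymm hTsymm).isClosable hdom
  refine ⟨hclos, fun x hx => ?_⟩
  obtain ⟨a, ha, hSTa⟩ := hclos.exists_seq_tendsto x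
  have hq : Tendsto (fun n => (⟪(a n : E), (S + T) (a n)⟫).re) atTop (𝓝 0) := by
    have h := (Complex.continuous_re.tendsto _).comp (ha.inner hSTa)
    rwa [hx, inner_zero_right, Complex.zero_re] at h
  have hqS : Tendsto (fun n => (⟪(a n : E), S ⟨a n, (a n).2.1⟩⟫).re) atTop (𝓝 0) := by
    refine squeeze_zero (fun n => hSpos ⟨a n, (a n).2.1⟩) (fun n => ?_) hq
    rw [LinearPMap.add_apply, inner_add_right, Complex.add_re]
    linarith [hTpos ⟨a n, (a n).2.2⟩]
  have hqT : Tendsto (fun n => (⟪(a n : E), T ⟨a n, (a n).2.2⟩⟫).re) atTop (𝓝 0) := by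
    refine squeeze_zero (fun n => hTpos ⟨a n, (a n).2.2⟩) (fun n => ?_) hq
    rw [LinearPMap.add_apply, inner_add_right, Complex.add_re]
    linarith [hSpos ⟨a n, (a n).2.1⟩]
  obtain ⟨hxS, hS0⟩ := exists_closure_apply_eq_zero_of_tendsto hSsymm hSpos hSesa.1 hSesa.2
    (a := fun n => ⟨a n, (a n).2.1⟩) ha hqS
  obtain ⟨hxT, hT0⟩ := exists_closure_apply_eq_zero_of_tendsto hTsymm hTpos hTesa.1 hTesa.2
    (a := fun n => ⟨a n, (a n).2.2⟩) ha hqT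
  exact ⟨hxS, hxT, hS0, hT0⟩
end

section
/- Let n, k be natural numbers with k ≥ 1 and let A be a positive definite (hence hermitian) complex n × n matrix. Define the complex matrix B indexed by functions p, q : Fin k → Fin n by B(p, q) = ∑_{i : Fin k} A(p i, q i) · ∏_{j ≠ i} δ_{p j, q j}, where δ_{a,b} = 1 if a = b and 0 otherwise. Then B is positive definite. -/
/-!
Permuting the tensor factors so that slot `i` comes first turns `1 ⊗ ⋯ ⊗ A ⊗ ⋯ ⊗ 1` into
`A ⊗ 1`, which is positive definite as a Kronecker product of positive definite matrices;
a nonempty sum of positive definite matrices is positive definite.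
-/

open scoped ComplexOrder Kronecker

namespace Matrix

variable {ι m R 𝕜 : Type*} [Fintype ι] [DecidableEq ι] [DecidableEq m]

def actOnSlot [CommSemiring R] (A : Matrix m m R) (i : ι) : Matrix (ι → m) (ι → m) R :=
  (A ⊗ₖ (1 : Matrix ({ j // j ≠ i } → m) ({ j // j ≠ i } → m) R)).submatrix
    (Equiv.funSplitAt i m) (Equiv.funSplitAt i m)

theorem actOnSlot_apply [CommSemiring R] (A : Matrix m m R) (i : ι) (p q : ι → m) :
    actOnSlot A i p q =
      A (p i) (q i) * ∏ j ∈ Finset.univ.erase i, if p j = q j then (1 : R) else 0 := by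
  simp [actOnSlot, one_apply, Finset.prod_boole, funext_iff]

theorem PosDef.actOnSlot [RCLike 𝕜] [Finite m] {A : Matrix m m 𝕜} (hA : A.PosDef) (i : ι) :
    (Matrix.actOnSlot A i).PosDef :=
  (hA.kronecker PosDef.one).submatrix (Equiv.funSplitAt i m).injective

theorem PosDef.sum_actOnSlot [RCLike 𝕜] [Finite m] [Nonempty ι] {A : Matrix m m 𝕜}
    (hA : A.PosDef) :
    (∑ i : ι, Matrix.actOnSlot A i).PosDef :=
  posDef_sum Finset.univ_nonempty fun i _ => hA.actOnSlot i

end Matrix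

/-- If `A` is a positive definite complex `n × n` matrix and `k ≥ 1`, then the matrix of
the derivation extension `∑ᵢ 1 ⊗ ⋯ ⊗ A ⊗ ⋯ ⊗ 1` of `A` on the `k`-th tensor power of `ℂⁿ`
(in the standard tensor basis) is positive definite. -/
theorem derivation_extension_posDef (n k : ℕ) (hk : 1 ≤ k)
    (A : Matrix (Fin n) (Fin n) ℂ) (hA : A.PosDef) :
    Matrix.PosDef (fun p q : Fin k → Fin n =>
      ∑ i : Fin k, A (p i) (q i) *
        ∏ j ∈ Finset.univ.erase i, (if p j = q j then (1 : ℂ) else 0)) := by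
  have : Nonempty (Fin k) := ⟨⟨0, hk⟩⟩
  have hB : (fun p q : Fin k → Fin n => ∑ i : Fin k, A (p i) (q i) *
      ∏ j ∈ Finset.univ.erase i, (if p j = q j then (1 : ℂ) else 0)) =
      ∑ i, Matrix.actOnSlot A i := by
    ext p q
    simp [Matrix.sum_apply, Matrix.actOnSlot_apply]
  exact hB ▸ hA.sum_actOnSlot
end
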